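/- Let n > m, let C ⊆ F_{q^m}^n be an F_{q^m}-linear vector rank-metric code, let Γ be a basis of F_{q^m} over F_q, and let Γ(C) ⊆ Mat_{n×m}(F_q) be the associated rank-metric code. Then: (1) C and Γ(C) are both MRD if and only if C = 0 or C = F_{q^m}^n; (2) C is an optimal vector anticode and Γ(C) is an optimal anticode if and only if C = 0. -/

import Mathlib

open Matrix

/-- The rank weight of `v : Fqm^n`: the dimension over `Fq` of the `Fq`-span of its entries. -/
noncomputable def rkw (Fq : Type*) [Field Fq] {Fqm : Type*} [Field Fqm] [Algebra Fq Fqm]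
    {n : ℕ} (v : Fin n → Fqm) : ℕ :=
  Module.finrank Fq (Submodule.span Fq (Set.range v))

open scoped Classical in
/-- Minimum distance of a vector rank-metric code. -/
noncomputable def dminVec (Fq : Type*) [Field Fq] {Fqm : Type*} [Field Fqm] [Algebra Fq Fqm]
    {n : ℕ} (C : Submodule Fqm (Fin n → Fqm)) : ℕ :=
  if C = ⊥ then n + 1 else sInf {r : ℕ | ∃ v ∈ C, v ≠ 0 ∧ rkw Fq v = r}

open scoped Classical in
/-- Minimum distance of a matrix rank-metric code. -/
noncomputable def dminMat {Fq : Type*} [Field Fq] {n m : ℕ}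
    (C : Submodule Fq (Matrix (Fin n) (Fin m) Fq)) : ℕ :=
  if C = ⊥ then min m n + 1
  else sInf {r : ℕ | ∃ M ∈ C, M ≠ 0 ∧ M.rank = r}

/-- Maximum rank of a vector rank-metric code. -/
noncomputable def maxrkVec (Fq : Type*) [Field Fq] {Fqm : Type*} [Field Fqm] [Algebra Fq Fqm]
    {n : ℕ} (C : Submodule Fqm (Fin n → Fqm)) : ℕ :=
  sSup {r : ℕ | ∃ v ∈ C, rkw Fq v = r}

/-- Maximum rank of a matrix rank-metric code. -/
noncomputable def maxrkMat {Fq : Type*} [Field Fq] {n m : ℕ}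
    (C : Submodule Fq (Matrix (Fin n) (Fin m) Fq)) : ℕ :=
  sSup {r : ℕ | ∃ M ∈ C, M.rank = r}

/-- The `Fq`-linear map `v ↦ Γ(v)` from `Fqm^n` to `n × m` matrices over `Fq`,
where `Γ(v) i j` is the `j`-th coordinate of `v i` in the basis `Γ`. -/
noncomputable def gammaLin {Fq Fqm : Type*} [Field Fq] [Field Fqm] [Algebra Fq Fqm]
    {n m : ℕ} (Γ : Module.Basis (Fin m) Fq Fqm) :
    (Fin n → Fqm) →ₗ[Fq] Matrix (Fin n) (Fin m) Fq where
  toFun v := Matrix.of fun i j => Γ.repr (v i) j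
  map_add' v w := by ext i j; simp
  map_smul' c v := by ext i j; simp


/-!
`Γ` is an injective `Fq`-linear map preserving rank, so `Γ(C)` has `Fq`-dimension `m · k`
(with `k = dim C`), minimum distance `d = dmin C` when `C ≠ 0`, and maximum rank `maxrk C`.
Both MRD equations give `m (n - d + 1) = n (m - d + 1)`, i.e. `(n - m)(d - 1) = 0`, so `d = 1`
and `k = n`; both anticode equations give `m k = n k`, so `k = 0`.
-/

section RankWeight

variable {Fq Fqm : Type*} [Field Fq] [Field Fqm] [Algebra Fq Fqm] {n : ℕ}

theorem rkw_eq_zero_iff {v : Fin n → Fqm} : rkw Fq v = 0 ↔ v = 0 := by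
  have := FiniteDimensional.span_of_finite Fq (Set.finite_range v)
  rw [rkw, Submodule.finrank_eq_zero, Submodule.span_eq_bot, Set.forall_mem_range, funext_iff]
  rfl

theorem rkw_const [Nonempty (Fin n)] {a : Fqm} (ha : a ≠ 0) :
    rkw Fq (fun _ : Fin n => a) = 1 := by
  rw [rkw, Set.range_const, finrank_span_singleton ha]

theorem dminVec_top (hn : 0 < n) : dminVec Fq (⊤ : Submodule Fqm (Fin n → Fqm)) = 1 := by
  have : Nonempty (Fin n) := Fin.pos_iff_nonempty.mp hn
  have hone : (fun _ : Fin n => (1 : Fqm)) ≠ 0 := Function.const_ne_zero.mpr one_ne_zero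
  have hS :
      1 ∈ {r : ℕ | ∃ v ∈ (⊤ : Submodule Fqm (Fin n → Fqm)), v ≠ 0 ∧ rkw Fq v = r} :=
    ⟨_, Submodule.mem_top, hone, rkw_const one_ne_zero⟩
  rw [dminVec, if_neg ((Submodule.ne_bot_iff _).mpr ⟨_, Submodule.mem_top, hone⟩)]
  refine le_antisymm (Nat.sInf_le hS) (le_csInf ⟨1, hS⟩ ?_)
  rintro r ⟨w, -, hw, rfl⟩
  exact Nat.one_le_iff_ne_zero.mpr (rkw_eq_zero_iff.not.mpr hw)

theorem maxrkVec_bot : maxrkVec Fq (⊥ : Submodule Fqm (Fin n → Fqm)) = 0 := by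
  simp [maxrkVec, rkw_eq_zero_iff.mpr]

end RankWeight

section GammaLin

variable {Fq Fqm : Type*} [Field Fq] [Field Fqm] [Algebra Fq Fqm] {n m : ℕ}
  (Γ : Module.Basis (Fin m) Fq Fqm)

theorem gammaLin_injective : Function.Injective (gammaLin (n := n) Γ) :=
  fun _ _ h => funext fun i =>
    Γ.repr.injective <| Finsupp.ext fun j => congrFun (congrFun h i) j

theorem rank_gammaLin (v : Fin n → Fqm) : (gammaLin Γ v).rank = rkw Fq v := by
  have hrows : Set.range (gammaLin Γ v).row =
      (Γ.equivFun : Fqm →ₗ[Fq] Fin m → Fq) '' Set.range v := by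
    rw [← Set.range_comp]; rfl
  rw [Matrix.rank_eq_finrank_span_row, rkw, hrows, ← Submodule.map_span,
    LinearEquiv.finrank_map_eq]

variable (C : Submodule Fqm (Fin n → Fqm))

theorem finrank_map_gammaLin :
    Module.finrank Fq ((C.restrictScalars Fq).map (gammaLin Γ)) = m * Module.finrank Fqm C := by
  have : Module.Finite Fq Fqm := Module.Finite.of_basis Γ
  rw [← (Submodule.equivMapOfInjective _ (gammaLin_injective Γ) _).finrank_eq,
    ((C.restrictScalarsEquiv Fq).restrictScalars Fq).finrank_eq,
    ← Module.finrank_mul_finrank Fq Fqm, Module.finrank_eq_card_basis Γ, Fintype.card_fin]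

theorem map_gammaLin_eq_bot_iff : (C.restrictScalars Fq).map (gammaLin Γ) = ⊥ ↔ C = ⊥ := by
  rw [← Submodule.map_bot (gammaLin Γ),
    (Submodule.map_injective_of_injective (gammaLin_injective Γ)).eq_iff,
    Submodule.restrictScalars_eq_bot_iff]

theorem dminMat_map_gammaLin (hC : C ≠ ⊥) :
    dminMat ((C.restrictScalars Fq).map (gammaLin Γ)) = dminVec Fq C := by
  rw [dminMat, dminVec, if_neg hC, if_neg ((map_gammaLin_eq_bot_iff Γ C).not.mpr hC)]
  simp [map_ne_zero_iff _ (gammaLin_injective Γ), rank_gammaLin]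

theorem maxrkMat_map_gammaLin :
    maxrkMat ((C.restrictScalars Fq).map (gammaLin Γ)) = maxrkVec Fq C := by
  simp [maxrkMat, maxrkVec, rank_gammaLin]

end GammaLin

theorem stmt10_general {Fq Fqm : Type*} [Field Fq] [Field Fqm] [Algebra Fq Fqm]
    {n m : ℕ} (hnm : m < n) (Γ : Module.Basis (Fin m) Fq Fqm)
    (C : Submodule Fqm (Fin n → Fqm)) :
    ((((Module.finrank Fqm C : ℤ) = (n : ℤ) - (dminVec Fq C : ℤ) + 1) ∧
      ((Module.finrank Fq (Submodule.map (gammaLin Γ) (C.restrictScalars Fq)) : ℤ) =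
        (max n m : ℤ) * ((min m n : ℤ) -
          (dminMat (Submodule.map (gammaLin Γ) (C.restrictScalars Fq)) : ℤ) + 1))) ↔
      (C = ⊥ ∨ C = ⊤)) ∧
    (((Module.finrank Fqm C = maxrkVec Fq C) ∧
      (Module.finrank Fq (Submodule.map (gammaLin Γ) (C.restrictScalars Fq)) =
        max n m * maxrkMat (Submodule.map (gammaLin Γ) (C.restrictScalars Fq)))) ↔
      C = ⊥) := by
  have hn : 0 < n := m.zero_le.trans_lt hnm
  have : Nonempty (Fin n) := Fin.pos_iff_nonempty.mp hn
  have hdim := finrank_map_gammaLin Γ C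
  have hmaxZ : max (n : ℤ) m = n := max_eq_left (by exact_mod_cast hnm.le)
  have hminZ : min (m : ℤ) n = m := min_eq_left (by exact_mod_cast hnm.le)
  refine ⟨⟨fun ⟨hvec, hmat⟩ => ?_, ?_⟩, ⟨fun ⟨hvec, hmat⟩ => ?_, ?_⟩⟩
  · refine (eq_or_ne C ⊥).imp id fun hC => ?_
    rw [dminMat_map_gammaLin Γ C hC, hdim, hmaxZ, hminZ] at hmat
    push_cast at hmat
    have hprod : ((n : ℤ) - m) * (dminVec Fq C - 1) = 0 := by
      linear_combination hmat - (m : ℤ) * hvec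
    have hd : (dminVec Fq C : ℤ) = 1 := sub_eq_zero.mp <|
      (mul_eq_zero.mp hprod).resolve_left (sub_ne_zero.mpr (by exact_mod_cast hnm.ne'))
    apply Submodule.eq_top_of_finrank_eq
    rw [Module.finrank_fin_fun]
    omega
  · rintro (rfl | rfl)
    · rw [(map_gammaLin_eq_bot_iff Γ ⊥).mpr rfl]
      simp [dminVec, dminMat]
    · rw [dminMat_map_gammaLin Γ ⊤ top_ne_bot, hdim, dminVec_top hn, finrank_top,
        Module.finrank_fin_fun, hmaxZ, hminZ]
      push_cast
      constructor <;> ring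
  · rw [hdim, max_eq_left hnm.le, maxrkMat_map_gammaLin, ← hvec] at hmat
    exact Submodule.finrank_eq_zero.mp ((mul_eq_mul_right_iff.mp hmat).resolve_left hnm.ne)
  · rintro rfl
    rw [maxrkMat_map_gammaLin, maxrkVec_bot, (map_gammaLin_eq_bot_iff Γ ⊥).mpr rfl]
    simp

/-- For `n > m`: (1) `C` and `Γ(C)` are both MRD iff `C = 0` or `C = Fqm^n`;
(2) `C` is an optimal vector anticode and `Γ(C)` is an optimal anticode iff `C = 0`. -/
theorem stmt10 {Fq Fqm : Type*} [Field Fq] [Fintype Fq] [Field Fqm] [Algebra Fq Fqm]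
    {n m : ℕ} (hnm : m < n) (Γ : Module.Basis (Fin m) Fq Fqm)
    (C : Submodule Fqm (Fin n → Fqm)) :
    ((((Module.finrank Fqm C : ℤ) = (n : ℤ) - (dminVec Fq C : ℤ) + 1) ∧
      ((Module.finrank Fq (Submodule.map (gammaLin Γ) (C.restrictScalars Fq)) : ℤ) =
        (max n m : ℤ) * ((min m n : ℤ) -
          (dminMat (Submodule.map (gammaLin Γ) (C.restrictScalars Fq)) : ℤ) + 1))) ↔
      (C = ⊥ ∨ C = ⊤)) ∧
    (((Module.finrank Fqm C = maxrkVec Fq C) ∧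
      (Module.finrank Fq (Submodule.map (gammaLin Γ) (C.restrictScalars Fq)) =
        max n m * maxrkMat (Submodule.map (gammaLin Γ) (C.restrictScalars Fq)))) ↔
      C = ⊥) :=
  stmt10_general hnm Γ C
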